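/- Let 0 < t < u < r and let g : ℝ → ℝ be bounded measurable. Then P-a.s., E[g(ζ^r_u) | σ(ζ^r_t)] = G(ζ^r_t), where for x ∈ (0,1), G(x) := ∫_x^1 g(y) · [Γ(r−t)/(Γ(u−t)Γ(r−u))] · (y−x)^{u−t−1}(1−y)^{r−u−1}/(1−x)^{r−t−1} dy. In other words, the regular conditional law of ζ^r_u given ζ^r_t = x ∈ (0,1) has density Γ(r−t)/(Γ(u−t)Γ(r−u)) · (y−x)^{u−t−1}(1−y)^{r−u−1}/(1−x)^{r−t−1} · 1_{x<y<1} in y. -/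

import Mathlib

/-!
Write `X₀ = γ_t`, `X₁ = γ_u - γ_t`, `X₂ = γ_r - γ_u`: independent gamma variables of shapes
`t`, `u - t`, `r - u`. Then `ζ_t = X₀ / (X₀ + S)` with `S = X₁ + X₂`, and
`ζ_u = ζ_t + (1 - ζ_t) W` with `W = X₁ / S`. By the beta–gamma algebra, `S` and `W` are
independent with laws `Γ(r - t)` and `Beta(u - t, r - u)`, so `W` is independent of `(X₀, S)`
and hence of `ζ_t`. Freezing `ζ_t = x`, the conditional law of `ζ_u` is the image of
`Beta(u - t, r - u)` under `w ↦ x + (1 - x) w`, whose density is the one in the statement.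
-/

open MeasureTheory ProbabilityTheory Real Set Filter

noncomputable section

/-- A standard gamma process on a probability space: starts at `0` a.s., has independent
increments, the increment over `[s, t]` is gamma-distributed with shape `t - s` and rate `1`,
and almost every sample path is right-continuous with left limits. -/
structure IsStdGammaProcess {Ω : Type*} [MeasurableSpace Ω] (P : Measure Ω)
    (γ : ℝ → Ω → ℝ) : Prop where
  measurable : ∀ t : ℝ, Measurable (γ t)
  zero : ∀ᵐ ω ∂P, γ 0 ω = 0
  indep_incr : ∀ (n : ℕ) (t : Fin (n + 1) → ℝ), Monotone t → (∀ i, 0 ≤ t i) →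
    iIndepFun
      (fun i : Fin n => fun ω => γ (t i.succ) ω - γ (t i.castSucc) ω) P
  incr_law : ∀ s t : ℝ, 0 ≤ s → s < t →
    P.map (fun ω => γ t ω - γ s ω) = gammaMeasure (t - s) 1
  cadlag : ∀ᵐ ω ∂P,
    (∀ t : ℝ, 0 ≤ t → ContinuousWithinAt (fun s => γ s ω) (Set.Ici t) t) ∧
    (∀ t : ℝ, 0 < t → ∃ l : ℝ, Tendsto (fun s => γ s ω) (nhdsWithin t (Set.Iio t)) (nhds l))

open scoped ENNReal

namespace MeasureTheory

lemma lintegral_comp_mul_left_of_pos {s : ℝ} (hs : 0 < s) {f : ℝ → ℝ≥0∞} (hf : Measurable f) :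
    ENNReal.ofReal s * ∫⁻ w, f (s * w) = ∫⁻ y, f y := by
  rw [← lintegral_map hf (measurable_const_mul s), Real.map_volume_mul_left hs.ne',
    lintegral_smul_measure, smul_eq_mul, ← mul_assoc, ← ENNReal.ofReal_mul hs.le,
    abs_of_pos (inv_pos.mpr hs), mul_inv_cancel₀ hs.ne', ENNReal.ofReal_one, one_mul]

lemma lintegral_withDensity_prod_withDensity {α β : Type*} [MeasurableSpace α]
    [MeasurableSpace β] {μ : Measure α} {ν : Measure β} [SFinite μ] [SFinite ν]
    {f : α → ℝ≥0∞} {g : β → ℝ≥0∞} (hf : Measurable f) (hg : Measurable g)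
    {φ : α × β → ℝ≥0∞} (hφ : Measurable φ) :
    ∫⁻ p, φ p ∂((μ.withDensity f).prod (ν.withDensity g)) =
      ∫⁻ x, ∫⁻ y, f x * g y * φ (x, y) ∂ν ∂μ := by
  rw [prod_withDensity hf hg, lintegral_withDensity_eq_lintegral_mul _ (by fun_prop) hφ,
    lintegral_prod _ (by fun_prop)]
  rfl

lemma Measure.map_prod_prod_eq_map_prod {α β γ δ : Type*} [MeasurableSpace α] [MeasurableSpace β]
    [MeasurableSpace γ] [MeasurableSpace δ] (μ : Measure α) (ν : Measure β) (τ : Measure γ)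
    [SFinite μ] [SFinite ν] [SFinite τ] {h : α × β → δ} (hh : Measurable h) :
    (μ.prod (ν.prod τ)).map (fun p => (h (p.1, p.2.1), p.2.2)) = ((μ.prod ν).map h).prod τ := by
  conv_rhs => rw [← Measure.map_id (μ := τ), Measure.map_prod_map _ _ hh measurable_id]
  rw [← (measurePreserving_prodAssoc μ ν τ).map_eq,
    Measure.map_map (by fun_prop) MeasurableEquiv.prodAssoc.measurable]
  rfl

end MeasureTheory

namespace ProbabilityTheory

@[fun_prop]
lemma measurable_gammaPDF (a r : ℝ) : Measurable (gammaPDF a r) :=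
  (measurable_gammaPDFReal a r).ennreal_ofReal

@[fun_prop]
lemma measurable_betaPDF (a b : ℝ) : Measurable (betaPDF a b) :=
  (measurable_betaPDFReal a b).ennreal_ofReal

instance (a r : ℝ) : SFinite (gammaMeasure a r) := by
  unfold gammaMeasure; infer_instance

instance (a b : ℝ) : SFinite (betaMeasure a b) := by
  unfold betaMeasure; infer_instance

lemma ae_pos_gammaMeasure (a r : ℝ) : ∀ᵐ x ∂(gammaMeasure a r), 0 < x := by
  rw [gammaMeasure, ae_withDensity_iff (measurable_gammaPDF a r)]
  filter_upwards [measure_eq_zero_iff_ae_notMem.1 (measure_singleton (0 : ℝ))] with x hx hpdf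
  by_contra hx'
  exact hpdf (gammaPDF_of_neg (lt_of_le_of_ne (not_lt.1 hx') hx))

variable {a b r : ℝ}

lemma betaPDFReal_nonneg (ha : 0 < a) (hb : 0 < b) (w : ℝ) : 0 ≤ betaPDFReal a b w := by
  have := beta_pos ha hb
  unfold betaPDFReal
  split_ifs with hw
  · have : 0 ≤ 1 - w := by linarith [hw.2]
    have : 0 ≤ w := hw.1.le
    positivity
  · exact le_rfl

lemma gammaPDF_mul_gammaPDF_sub_eq (ha : 0 < a) (hb : 0 < b) (hr : 0 < r) {s w : ℝ}
    (hs : 0 < s) (hw0 : w ≠ 0) (hw1 : w ≠ 1) :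
    ENNReal.ofReal s * (gammaPDF a r (s * w) * gammaPDF b r (s - s * w)) =
      gammaPDF (a + b) r s * betaPDF a b w := by
  rcases lt_or_gt_of_ne hw0 with hw | hw
  · rw [gammaPDF_of_neg (mul_neg_of_pos_of_neg hs hw), betaPDF_eq_zero_of_nonpos hw.le]
    simp
  rcases lt_or_gt_of_ne hw1 with hw' | hw'
  swap
  · rw [gammaPDF_of_neg (x := s - s * w) (by nlinarith), betaPDF_eq_zero_of_one_le hw'.le]
    simp
  have h1w : 0 < 1 - w := by linarith
  have hΓa := Gamma_pos_of_pos ha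
  have hΓb := Gamma_pos_of_pos hb
  have hΓab := Gamma_pos_of_pos (add_pos ha hb)
  rw [gammaPDF_of_nonneg (by positivity), gammaPDF_of_nonneg (by nlinarith),
    gammaPDF_of_nonneg hs.le, betaPDF_of_pos_lt_one hw hw', ← ENNReal.ofReal_mul (by positivity),
    ← ENNReal.ofReal_mul hs.le, ← ENNReal.ofReal_mul (by positivity)]
  congr 1
  have hexp : exp (-(r * s)) = exp (-(r * (s * w))) * exp (-(r * (s * (1 - w)))) := by
    rw [← exp_add]; ring_nf
  rw [show s - s * w = s * (1 - w) by ring, mul_rpow hs.le hw.le, mul_rpow hs.le h1w.le, hexp,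
    rpow_add hr, show a + b - 1 = (a - 1) + (b - 1) + 1 by ring, rpow_add hs, rpow_add hs,
    rpow_one, beta]
  field_simp

lemma gammaPDF_mul_gammaPDF_sub_of_neg {s : ℝ} (hs : s < 0) (y : ℝ) :
    gammaPDF a r y * gammaPDF b r (s - y) = 0 := by
  rcases lt_or_ge y 0 with hy | hy
  · rw [gammaPDF_of_neg hy, zero_mul]
  · rw [gammaPDF_of_neg (x := s - y) (by linarith), mul_zero]

lemma lintegral_gammaPDF_mul_gammaPDF_sub (ha : 0 < a) (hb : 0 < b) (hr : 0 < r) {s : ℝ}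
    (hs : 0 < s) {ψ : ℝ → ℝ≥0∞} (hψ : Measurable ψ) :
    ∫⁻ y, gammaPDF a r y * gammaPDF b r (s - y) * ψ (y / s) =
      gammaPDF (a + b) r s * ∫⁻ w, betaPDF a b w * ψ w := by
  have hne : ∀ᵐ w : ℝ, w ∉ ({0, 1} : Set ℝ) :=
    measure_eq_zero_iff_ae_notMem.1 ((Set.toFinite _).measure_zero _)
  rw [← lintegral_comp_mul_left_of_pos hs (by fun_prop),
    ← lintegral_const_mul' _ _ ENNReal.ofReal_ne_top,
    ← lintegral_const_mul' (gammaPDF (a + b) r s) _ ENNReal.ofReal_ne_top]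
  refine lintegral_congr_ae (hne.mono fun w hw => ?_)
  obtain ⟨hw0, hw1⟩ : w ≠ 0 ∧ w ≠ 1 := by simpa [not_or] using hw
  simp only [mul_div_cancel_left₀ w hs.ne', ← mul_assoc,
    ← gammaPDF_mul_gammaPDF_sub_eq ha hb hr hs hw0 hw1]

theorem map_add_div_gammaMeasure_prod (ha : 0 < a) (hb : 0 < b) (hr : 0 < r) :
    ((gammaMeasure a r).prod (gammaMeasure b r)).map (fun p => (p.1 + p.2, p.1 / (p.1 + p.2))) =
      (gammaMeasure (a + b) r).prod (betaMeasure a b) := by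
  refine Measure.ext_of_lintegral _ fun φ hφ => ?_
  have hne : ∀ᵐ s : ℝ, s ≠ 0 := measure_eq_zero_iff_ae_notMem.1 (measure_singleton 0)
  unfold gammaMeasure betaMeasure
  rw [lintegral_map hφ (by fun_prop),
    lintegral_withDensity_prod_withDensity (by fun_prop) (by fun_prop) (by fun_prop),
    lintegral_withDensity_prod_withDensity (by fun_prop) (by fun_prop) hφ]
  calc ∫⁻ y, ∫⁻ z, gammaPDF a r y * gammaPDF b r z * φ (y + z, y / (y + z))
      = ∫⁻ y, ∫⁻ s, gammaPDF a r y * gammaPDF b r (s - y) * φ (s, y / s) := by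
        refine lintegral_congr fun y => ?_
        rw [← lintegral_add_left_eq_self
          (fun s => gammaPDF a r y * gammaPDF b r (s - y) * φ (s, y / s)) y]
        simp only [add_sub_cancel_left]
    _ = ∫⁻ s, ∫⁻ y, gammaPDF a r y * gammaPDF b r (s - y) * φ (s, y / s) :=
        lintegral_lintegral_swap (by fun_prop)
    _ = ∫⁻ s, ∫⁻ w, gammaPDF (a + b) r s * betaPDF a b w * φ (s, w) := by
        refine lintegral_congr_ae (hne.mono fun s hs => ?_)
        rcases hs.lt_or_gt with hs | hs
        · simp [gammaPDF_mul_gammaPDF_sub_of_neg hs, gammaPDF_of_neg hs]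
        · dsimp only
          rw [lintegral_gammaPDF_mul_gammaPDF_sub ha hb hr hs (ψ := fun w => φ (s, w))
              (by fun_prop),
            ← lintegral_const_mul' (gammaPDF (a + b) r s) _ ENNReal.ofReal_ne_top]
          simp only [mul_assoc]

theorem map_ratios_gammaMeasure_prod (μ : Measure ℝ) [SFinite μ]
    (ha : 0 < a) (hb : 0 < b) (hr : 0 < r) :
    (μ.prod ((gammaMeasure a r).prod (gammaMeasure b r))).map
        (fun p => (p.1 / (p.1 + (p.2.1 + p.2.2)), p.2.1 / (p.2.1 + p.2.2))) =
      ((μ.prod (gammaMeasure (a + b) r)).map (fun q => q.1 / (q.1 + q.2))).prod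
        (betaMeasure a b) := by
  calc (μ.prod ((gammaMeasure a r).prod (gammaMeasure b r))).map
        (fun p => (p.1 / (p.1 + (p.2.1 + p.2.2)), p.2.1 / (p.2.1 + p.2.2)))
      = ((μ.map id).prod (((gammaMeasure a r).prod (gammaMeasure b r)).map
          (fun p => (p.1 + p.2, p.1 / (p.1 + p.2))))).map
          (fun p => (p.1 / (p.1 + p.2.1), p.2.2)) := by
        rw [Measure.map_prod_map _ _ measurable_id (by fun_prop), Measure.map_map (by fun_prop)
          (by fun_prop)]
        rfl
    _ = _ := by
        rw [Measure.map_id, map_add_div_gammaMeasure_prod ha hb hr]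
        exact Measure.map_prod_prod_eq_map_prod _ _ _ (h := fun q => q.1 / (q.1 + q.2))
          (by fun_prop)

lemma integral_betaMeasure (ha : 0 < a) (hb : 0 < b) (h : ℝ → ℝ) :
    ∫ w, h w ∂(betaMeasure a b) =
      ∫ w in 0..1, Gamma (a + b) / (Gamma a * Gamma b) * w ^ (a - 1) * (1 - w) ^ (b - 1) * h w := by
  have hdensity : ∀ w, (betaPDFReal a b w).toNNReal • h w = (Ioo 0 1).indicator
      (fun w => Gamma (a + b) / (Gamma a * Gamma b) * w ^ (a - 1) * (1 - w) ^ (b - 1) * h w) w := by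
    intro w
    rw [NNReal.smul_def, Real.coe_toNNReal _ (betaPDFReal_nonneg ha hb w)]
    by_cases hw : w ∈ Ioo 0 1
    · rw [betaPDFReal, if_pos (show 0 < w ∧ w < 1 from hw), indicator_of_mem hw, smul_eq_mul,
        beta, one_div_div]
    · rw [betaPDFReal, if_neg (show ¬(0 < w ∧ w < 1) from hw), indicator_of_notMem hw,
        zero_smul]
  rw [betaMeasure, show betaPDF a b = fun w => ((betaPDFReal a b w).toNNReal : ℝ≥0∞) from rfl,
    integral_withDensity_eq_integral_smul (measurable_betaPDFReal a b).real_toNNReal,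
    integral_congr_ae (ae_of_all _ hdensity), integral_indicator measurableSet_Ioo,
    ← integral_Ioc_eq_integral_Ioo, intervalIntegral.integral_of_le zero_le_one]

theorem integral_betaMeasure_comp_affine (ha : 0 < a) (hb : 0 < b) (g : ℝ → ℝ) {v : ℝ}
    (hv : v < 1) :
    ∫ w, g (v + (1 - v) * w) ∂(betaMeasure a b) =
      ∫ y in v..1, g y * (Gamma (a + b) / (Gamma a * Gamma b)) *
        ((y - v) ^ (a - 1) * (1 - y) ^ (b - 1) / (1 - v) ^ (a + b - 1)) := by
  have hv' : 0 < 1 - v := by linarith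
  have hsubst := intervalIntegral.smul_integral_comp_mul_add (a := 0) (b := 1)
    (fun y => g y * (Gamma (a + b) / (Gamma a * Gamma b)) *
      ((y - v) ^ (a - 1) * (1 - y) ^ (b - 1) / (1 - v) ^ (a + b - 1))) (1 - v) v
  rw [mul_zero, zero_add, mul_one, sub_add_cancel, ← intervalIntegral.integral_smul] at hsubst
  rw [integral_betaMeasure ha hb, ← hsubst]
  refine intervalIntegral.integral_congr fun w hw => ?_
  rw [uIcc_of_le zero_le_one] at hw
  rw [show (1 - v) * w + v - v = (1 - v) * w by ring,
    show 1 - ((1 - v) * w + v) = (1 - v) * (1 - w) by ring,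
    mul_rpow hv'.le hw.1, mul_rpow hv'.le (by linarith [hw.2]),
    show a + b - 1 = (a - 1) + (b - 1) + 1 by ring, rpow_add hv', rpow_add hv', rpow_one,
    smul_eq_mul, add_comm ((1 - v) * w) v]
  field_simp

theorem condExp_comp_prodMk_ae_eq_integral_of_map_eq_prod {α β Ω F : Type*}
    [MeasurableSpace α] [MeasurableSpace β] [MeasurableSpace Ω] [StandardBorelSpace Ω]
    [Nonempty Ω] [NormedAddCommGroup F] [NormedSpace ℝ F] [CompleteSpace F]
    {μ : Measure α} [IsFiniteMeasure μ] {X : α → β} {Y : α → Ω} {f : β × Ω → F}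
    {ρ : Measure β} {ν : Measure Ω} [IsProbabilityMeasure ν]
    (hX : Measurable X) (hY : AEMeasurable Y μ)
    (hXY : μ.map (fun a => (X a, Y a)) = ρ.prod ν)
    (hf : StronglyMeasurable f) (hf_int : Integrable (fun a => f (X a, Y a)) μ) :
    μ[fun a => f (X a, Y a) | MeasurableSpace.comap X inferInstance] =ᵐ[μ]
      fun a => ∫ y, f (X a, y) ∂ν := by
  have hρ : μ.map X = ρ := by
    rw [← Measure.fst_map_prodMk₀ hY, hXY, Measure.fst_prod]
  have hκ : condDistrib Y X μ =ᵐ[μ.map X] Kernel.const β ν :=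
    condDistrib_ae_eq_of_measure_eq_compProd X hY (by rw [hXY, Measure.compProd_const, hρ])
  filter_upwards [condExp_prod_ae_eq_integral_condDistrib hX hY hf hf_int,
    ae_of_ae_map hX.aemeasurable hκ] with a h1 h2
  rw [h1, h2, Kernel.const_apply]

end ProbabilityTheory

namespace IsStdGammaProcess

variable {Ω : Type*} [MeasurableSpace Ω] {P : Measure Ω} {γ : ℝ → Ω → ℝ}

lemma measurable_sub (hγ : IsStdGammaProcess P γ) (s t : ℝ) :
    Measurable fun ω => γ t ω - γ s ω :=
  (hγ.measurable t).sub (hγ.measurable s)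

lemma ae_lt (hγ : IsStdGammaProcess P γ) {s t : ℝ} (hs : 0 ≤ s) (hst : s < t) :
    ∀ᵐ ω ∂P, γ s ω < γ t ω := by
  have h := ae_pos_gammaMeasure (t - s) 1
  rw [← hγ.incr_law s t hs hst] at h
  filter_upwards [ae_of_ae_map (hγ.measurable_sub s t).aemeasurable h]
    with ω hω using sub_pos.1 hω

lemma ae_pos (hγ : IsStdGammaProcess P γ) {t : ℝ} (ht : 0 < t) : ∀ᵐ ω ∂P, 0 < γ t ω := by
  filter_upwards [hγ.zero, hγ.ae_lt le_rfl ht] with ω h0 h using h0 ▸ h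

lemma ae_div_lt_one (hγ : IsStdGammaProcess P γ) {t r : ℝ} (ht : 0 < t) (htr : t < r) :
    ∀ᵐ ω ∂P, γ t ω / γ r ω < 1 := by
  filter_upwards [hγ.ae_pos ht, hγ.ae_lt ht.le htr] with ω h1 h2
  exact (div_lt_one (by linarith)).2 h2

lemma ae_div_eq_add_mul_div (hγ : IsStdGammaProcess P γ) {t u r : ℝ} (ht : 0 < t) (htu : t < u)
    (hur : u < r) : ∀ᵐ ω ∂P, γ u ω / γ r ω =
      γ t ω / γ r ω + (1 - γ t ω / γ r ω) * ((γ u ω - γ t ω) / (γ r ω - γ t ω)) := by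
  filter_upwards [hγ.ae_pos ht, hγ.ae_lt ht.le htu, hγ.ae_lt (ht.trans htu).le hur]
    with ω h1 h2 h3
  have : γ r ω ≠ 0 := by linarith
  have : γ r ω - γ t ω ≠ 0 := by linarith
  field_simp
  ring

theorem map_sub_prod [IsProbabilityMeasure P] (hγ : IsStdGammaProcess P γ) {t₀ t₁ t₂ t₃ : ℝ}
    (h₀ : 0 ≤ t₀) (h₀₁ : t₀ < t₁) (h₁₂ : t₁ < t₂) (h₂₃ : t₂ < t₃) :
    P.map (fun ω => (γ t₁ ω - γ t₀ ω, (γ t₂ ω - γ t₁ ω, γ t₃ ω - γ t₂ ω))) =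
      (gammaMeasure (t₁ - t₀) 1).prod
        ((gammaMeasure (t₂ - t₁) 1).prod (gammaMeasure (t₃ - t₂) 1)) := by
  have hmeas := hγ.measurable_sub
  have hmono : Monotone ![t₀, t₁, t₂, t₃] := by
    rw [Fin.monotone_iff_le_succ]
    intro i
    fin_cases i
    exacts [h₀₁.le, h₁₂.le, h₂₃.le]
  have hind := hγ.indep_incr 3 ![t₀, t₁, t₂, t₃] hmono fun i => h₀.trans (hmono (Fin.zero_le i))
  have hind₁ : IndepFun (fun ω => γ t₁ ω - γ t₀ ω)
      (fun ω => (γ t₂ ω - γ t₁ ω, γ t₃ ω - γ t₂ ω)) P :=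
    (hind.indepFun_prodMk (fun i => hmeas _ _) 1 2 0 (by decide) (by decide)).symm
  have hind₂ : IndepFun (fun ω => γ t₂ ω - γ t₁ ω) (fun ω => γ t₃ ω - γ t₂ ω) P :=
    hind.indepFun (show (1 : Fin 3) ≠ 2 by decide)
  rw [hind₁.map_prod_eq_prod_map_map (hmeas _ _).aemeasurable
      ((hmeas _ _).prodMk (hmeas _ _)).aemeasurable,
    hind₂.map_prod_eq_prod_map_map (hmeas _ _).aemeasurable (hmeas _ _).aemeasurable,
    hγ.incr_law _ _ h₀ h₀₁, hγ.incr_law _ _ (h₀.trans h₀₁.le) h₁₂,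
    hγ.incr_law _ _ (h₀.trans (h₀₁.trans h₁₂).le) h₂₃]

theorem map_ratio_prod_eq_prod_betaMeasure [IsProbabilityMeasure P] (hγ : IsStdGammaProcess P γ)
    {t u r : ℝ} (ht : 0 < t) (htu : t < u) (hur : u < r) :
    P.map (fun ω => (γ t ω / γ r ω, (γ u ω - γ t ω) / (γ r ω - γ t ω))) =
      (P.map fun ω => γ t ω / γ r ω).prod (betaMeasure (u - t) (r - u)) := by
  have := isProbabilityMeasureBeta (sub_pos.2 htu) (sub_pos.2 hur)
  have hmeas := hγ.measurable_sub
  set ρ := ((gammaMeasure (t - 0) 1).prod (gammaMeasure (u - t + (r - u)) 1)).map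
    (fun q => q.1 / (q.1 + q.2))
  have hincr : (fun ω => (γ t ω / γ r ω, (γ u ω - γ t ω) / (γ r ω - γ t ω))) =ᵐ[P]
      (fun p => (p.1 / (p.1 + (p.2.1 + p.2.2)), p.2.1 / (p.2.1 + p.2.2))) ∘
        fun ω => (γ t ω - γ 0 ω, (γ u ω - γ t ω, γ r ω - γ u ω)) := by
    filter_upwards [hγ.zero] with ω h0
    simp only [Function.comp_apply, h0, sub_zero]
    congr 2 <;> ring
  have hjoint : P.map (fun ω => (γ t ω / γ r ω, (γ u ω - γ t ω) / (γ r ω - γ t ω))) =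
      ρ.prod (betaMeasure (u - t) (r - u)) := by
    rw [Measure.map_congr hincr, ← Measure.map_map (by fun_prop)
      ((hmeas 0 t).prodMk ((hmeas t u).prodMk (hmeas u r))),
      hγ.map_sub_prod le_rfl ht htu hur,
      map_ratios_gammaMeasure_prod _ (sub_pos.2 htu) (sub_pos.2 hur) one_pos]
  have hρ : P.map (fun ω => γ t ω / γ r ω) = ρ := by
    rw [← Measure.fst_map_prodMk (Y := fun ω => (γ u ω - γ t ω) / (γ r ω - γ t ω))
        ((hmeas t u).div (hmeas t r)),
      hjoint, Measure.fst_prod]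
  rw [hjoint, hρ]

end IsStdGammaProcess

/-- For `0 < t < u < r` and bounded measurable `g`, one has, `P`-a.s.,
`E[g(ζ^r_u) | σ(ζ^r_t)] = G(ζ^r_t)` where for `x ∈ (0,1)`,
`G(x) = ∫_x^1 g(y) Γ(r-t)/(Γ(u-t)Γ(r-u)) (y-x)^(u-t-1)(1-y)^(r-u-1)/(1-x)^(r-t-1) dy`. -/
theorem gamma_bridge_transition_law
    {Ω : Type*} [MeasurableSpace Ω] (P : Measure Ω) [IsProbabilityMeasure P]
    (γ : ℝ → Ω → ℝ) (hγ : IsStdGammaProcess P γ) (t u r : ℝ)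
    (ht : 0 < t) (htu : t < u) (hur : u < r)
    (ζ : ℝ → Ω → ℝ) (hζ : ∀ s ω, ζ s ω = γ (min s r) ω / γ r ω)
    (g : ℝ → ℝ) (hg : Measurable g) (C : ℝ) (hbd : ∀ x, |g x| ≤ C)
    (G : ℝ → ℝ)
    (hG : ∀ x : ℝ, G x = ∫ y in x..(1 : ℝ),
      g y * (Real.Gamma (r - t) / (Real.Gamma (u - t) * Real.Gamma (r - u))) *
        ((y - x) ^ (u - t - 1) * (1 - y) ^ (r - u - 1) / (1 - x) ^ (r - t - 1))) :
    P[fun ω => g (ζ u ω) | MeasurableSpace.comap (ζ t) inferInstance] =ᵐ[P]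
      fun ω => G (ζ t ω) := by
  have := isProbabilityMeasureBeta (sub_pos.2 htu) (sub_pos.2 hur)
  have hζ_le : ∀ s ≤ r, ζ s = fun ω => γ s ω / γ r ω := fun s hs =>
    funext fun ω => by rw [hζ, min_eq_left hs]
  rw [hζ_le t (htu.trans hur).le]
  set V := fun ω => γ t ω / γ r ω
  set W := fun ω => (γ u ω - γ t ω) / (γ r ω - γ t ω)
  have hV : Measurable V := (hγ.measurable t).div (hγ.measurable r)
  have hW : Measurable W := (hγ.measurable_sub t u).div (hγ.measurable_sub t r)
  have hζu : ζ u =ᵐ[P] fun ω => V ω + (1 - V ω) * W ω := by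
    rw [hζ_le u hur.le]
    exact hγ.ae_div_eq_add_mul_div ht htu hur
  have hint : Integrable (fun ω => g (V ω + (1 - V ω) * W ω)) P :=
    .of_bound (hg.comp (by fun_prop)).aestronglyMeasurable C (ae_of_all _ fun ω => hbd _)
  calc P[fun ω => g (ζ u ω) | MeasurableSpace.comap V inferInstance]
      =ᵐ[P] P[fun ω => g (V ω + (1 - V ω) * W ω) | MeasurableSpace.comap V inferInstance] :=
        condExp_congr_ae (hζu.fun_comp g)
    _ =ᵐ[P] fun ω => ∫ w, g (V ω + (1 - V ω) * w) ∂(betaMeasure (u - t) (r - u)) :=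
        condExp_comp_prodMk_ae_eq_integral_of_map_eq_prod (f := fun p => g (p.1 + (1 - p.1) * p.2))
          hV hW.aemeasurable (hγ.map_ratio_prod_eq_prod_betaMeasure ht htu hur)
          (hg.comp (by fun_prop)).stronglyMeasurable hint
    _ =ᵐ[P] fun ω => G (V ω) := by
        filter_upwards [hγ.ae_div_lt_one ht (htu.trans hur)] with ω hω
        rw [hG, integral_betaMeasure_comp_affine (sub_pos.2 htu) (sub_pos.2 hur) g hω,
          show u - t + (r - u) = r - t by ring]
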